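/- Cluster sampling representation of precision: if a random true cluster c is drawn from 𝒞 with probabilities proportional to weights p_c > 0, then P = N · E[ g(c, 𝒞̂)/p_c ] / E[ |c|/p_c ], where N = |D|. The unnormalized weights p_c suffice: the normalizing constant cancels. -/
import Mathlib


open Finset

/-- The set of unordered pairs of distinct elements lying in a common block of `P`. -/
def clPairs {α : Type*} [DecidableEq α] (P : Finset (Finset α)) : Finset (Sym2 α) :=
  (P.sup fun c => c.sym2).filter (fun p => ¬ p.IsDiag)

/-- The block of the partition `P` containing `i`. -/
def partOf {α : Type*} [DecidableEq α] (P : Finset (Finset α)) (i : α) : Finset α :=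
  (P.filter (fun c => i ∈ c)).sup id

/-- `f(c, 𝒞̂) = Σ_{ĉ ∈ 𝒞̂} C(|c ∩ ĉ|, 2)`, real-valued. -/
noncomputable def ffun {α : Type*} [DecidableEq α] (Cp : Finset (Finset α)) (c : Finset α) : ℝ :=
  ∑ d ∈ Cp, ((c ∩ d).card.choose 2 : ℝ)

/-- `g(c, 𝒞̂) = f(c, 𝒞̂) / Σ_{ĉ ∈ 𝒞̂} C(|ĉ|, 2)`. -/
noncomputable def gfun {α : Type*} [DecidableEq α] (Cp : Finset (Finset α)) (c : Finset α) : ℝ :=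
  ffun Cp c / (∑ d ∈ Cp, (d.card.choose 2 : ℝ))

lemma card_nondiag_sym2 {α : Type*} [DecidableEq α] (s : Finset α) :
    (s.sym2.filter (fun p => ¬ p.IsDiag)).card = s.card.choose 2 := by
  rw [Finset.sym2_eq_image, Sym2.filter_image_mk_not_isDiag, Sym2.card_image_offDiag]

lemma sym2_inter_eq {α : Type*} [DecidableEq α] (s t : Finset α) :
    s.sym2 ∩ t.sym2 = (s ∩ t).sym2 := by
  ext z
  simp only [Finset.mem_inter, Finset.mem_sym2_iff, ← forall_and]

lemma disjoint_sym2 {α : Type*} [DecidableEq α] {s t : Finset α} (h : Disjoint s t) :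
    Disjoint s.sym2 t.sym2 := by
  rw [Finset.disjoint_iff_inter_eq_empty, sym2_inter_eq,
    Finset.disjoint_iff_inter_eq_empty.mp h, Finset.sym2_empty]

lemma clPairs_card {α : Type*} [DecidableEq α] {D : Finset α} (P : Finpartition D) :
    (clPairs P.parts).card = ∑ d ∈ P.parts, d.card.choose 2 := by
  unfold clPairs
  rw [Finset.sup_eq_biUnion, Finset.filter_biUnion, Finset.card_biUnion, ]
  · exact Finset.sum_congr rfl fun d _ => card_nondiag_sym2 d
  · intro x hx y hy hxy
    exact (disjoint_sym2 (P.disjoint hx hy hxy)).mono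
      (Finset.filter_subset _ _) (Finset.filter_subset _ _)

lemma clPairs_inter_card {α : Type*} [DecidableEq α] {D : Finset α} (C Cp : Finpartition D) :
    (clPairs C.parts ∩ clPairs Cp.parts).card
      = ∑ c ∈ C.parts, ∑ d ∈ Cp.parts, ((c ∩ d).card.choose 2) := by
  have hset : clPairs C.parts ∩ clPairs Cp.parts
      = C.parts.biUnion fun c => Cp.parts.biUnion fun d =>
          ((c ∩ d).sym2.filter (fun p => ¬ p.IsDiag)) := by
    ext z
    simp only [clPairs, Finset.mem_inter, Finset.mem_filter, Finset.mem_sup,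
      Finset.mem_biUnion, Finset.mem_sym2_iff, Finset.mem_inter]
    constructor
    · rintro ⟨⟨⟨c, hc, hzc⟩, hnd⟩, ⟨d, hd, hzd⟩, -⟩
      exact ⟨c, hc, d, hd, fun a ha => ⟨hzc a ha, hzd a ha⟩, hnd⟩
    · rintro ⟨c, hc, d, hd, hz, hnd⟩
      exact ⟨⟨⟨c, hc, fun a ha => (hz a ha).1⟩, hnd⟩, ⟨d, hd, fun a ha => (hz a ha).2⟩, hnd⟩
  rw [hset, Finset.card_biUnion]
  · refine Finset.sum_congr rfl fun c _ => ?_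
    rw [Finset.card_biUnion]
    · exact Finset.sum_congr rfl fun d _ => card_nondiag_sym2 _
    · intro x hx y hy hxy
      refine (disjoint_sym2 ((Cp.disjoint hx hy hxy).mono ?_ ?_)).mono
        (Finset.filter_subset _ _) (Finset.filter_subset _ _) <;> exact Finset.inter_subset_right
  · intro x hx y hy hxy
    refine Finset.disjoint_left.mpr fun z hz hz' => ?_
    simp only [Finset.mem_biUnion, Finset.mem_filter] at hz hz'
    obtain ⟨d, hd, hzd, -⟩ := hz
    obtain ⟨d', hd', hzd', -⟩ := hz'
    exact (disjoint_sym2 ((C.disjoint hx hy hxy).mono Finset.inter_subset_left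
      Finset.inter_subset_left)).forall_ne_finset hzd hzd' rfl

theorem stmt5 {α : Type*} [DecidableEq α] (D : Finset α) (C Cp : Finpartition D)
    (w : Finset α → ℝ) (hw : ∀ c ∈ C.parts, 0 < w c)
    (hpred : 0 < ∑ d ∈ Cp.parts, (d.card.choose 2 : ℝ))
    (π : ℝ) (hπ : π = 1 / ∑ c ∈ C.parts, w c) :
    ((clPairs C.parts ∩ clPairs Cp.parts).card : ℝ) / (clPairs Cp.parts).card
      = (D.card : ℝ) * (∑ c ∈ C.parts, (π * w c) * (gfun Cp.parts c / w c))
          / (∑ c ∈ C.parts, (π * w c) * ((c.card : ℝ) / w c)) := by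
  -- Cp.parts is nonempty, hence D is nonempty
  have hCpne : Cp.parts.Nonempty := by
    rcases Cp.parts.eq_empty_or_nonempty with h | h
    · rw [h] at hpred; simp at hpred
    · exact h
  obtain ⟨d0, hd0⟩ := hCpne
  have hDne : D.Nonempty := (Cp.nonempty_of_mem_parts hd0).mono (Cp.le hd0)
  have hN : (0 : ℝ) < D.card := by exact_mod_cast Finset.card_pos.mpr hDne
  have hCne : C.parts.Nonempty := C.parts_nonempty (by simpa using hDne.ne_empty)
  have hW : (0 : ℝ) < ∑ c ∈ C.parts, w c := Finset.sum_pos hw hCne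
  have hπpos : 0 < π := by rw [hπ]; positivity
  -- cardinalities
  have hB : ((clPairs Cp.parts).card : ℝ) = ∑ d ∈ Cp.parts, (d.card.choose 2 : ℝ) := by
    rw [clPairs_card Cp]; push_cast; ring
  have hA : ((clPairs C.parts ∩ clPairs Cp.parts).card : ℝ) = ∑ c ∈ C.parts, ffun Cp.parts c := by
    rw [clPairs_inter_card C Cp]; push_cast [ffun]; ring
  -- denominator simplification
  have hden : (∑ c ∈ C.parts, (π * w c) * ((c.card : ℝ) / w c)) = π * D.card := by
    rw [Finset.sum_congr rfl fun c hc => ?_, ← Finset.mul_sum]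
    · congr 1
      rw [← Finpartition.sum_card_parts C]; push_cast; ring
    · field_simp [(hw c hc).ne']
  have hnum : (∑ c ∈ C.parts, (π * w c) * (gfun Cp.parts c / w c))
      = π * ((∑ c ∈ C.parts, ffun Cp.parts c) / (∑ d ∈ Cp.parts, (d.card.choose 2 : ℝ))) := by
    rw [Finset.sum_congr rfl fun c hc => ?_, ← Finset.mul_sum, ← Finset.sum_div]
    · unfold gfun
      field_simp [(hw c hc).ne']
  rw [hA, hB, hden, hnum]
  field_simp
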